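/- arXiv:quant-ph/0409049 — 2 statements merged into one kernel-verified Lean document; each statement's English description precedes it below -/
import Mathlib

section
/- The operator Z̄ = (1/3)(E₁₃ + E₂₃ - 2E₁₂) on (C²)^⊗3 satisfies Z̄³ = Z̄, i.e. Z̄ squares to the orthogonal projection onto the 4-dimensional code subspace spanned by (|010⟩-|100⟩)/√2, (|011⟩-|101⟩)/√2, (2|001⟩-|010⟩-|100⟩)/√6, (-2|110⟩+|011⟩+|101⟩)/√6, and hence R_L = exp(-iπZ̄) acts as -1 on this code subspace and as identity on its orthogonal complement. -/
/-!
`E₁₃, E₂₃, E₁₂` are the permutation matrices of the transpositions of `S₃`, and the relations of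
`S₃` alone give `S² = 6 - 3(r + r²)` and `S³ = 9S` for `S = E₁₃ + E₂₃ - 2E₁₂`, where `r` is the
cyclic shift of the qubits. Hence `Z̄³ = Z̄` and `Z̄² = 1 - N/3` with `N = 1 + r + r²`. Each code
vector has amplitudes summing to zero on every orbit of the cyclic shift, so `N` kills the code
space; a vector orthogonal to it is invariant under all qubit permutations, so `N` acts on it
as `3`.
Finally `Z³ = Z` splits the exponential series into `exp (tZ) = (1 - Z²) + cosh t Z² + sinh t Z`,
which at `t = -iπ` is `1 - 2Z²`.
-/

open Matrix

/-- Computational basis vector `|abc⟩` of the 3-qubit space. -/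
noncomputable def ket3 (a b c : Fin 2) : Fin 2 × Fin 2 × Fin 2 → ℂ :=
  fun x => if x = (a, b, c) then 1 else 0

/-- Swap of qubits 1 and 2. -/
noncomputable def E12 : Matrix (Fin 2 × Fin 2 × Fin 2) (Fin 2 × Fin 2 × Fin 2) ℂ :=
  Matrix.of fun p q => if q = (p.2.1, p.1, p.2.2) then 1 else 0

/-- Swap of qubits 1 and 3. -/
noncomputable def E13 : Matrix (Fin 2 × Fin 2 × Fin 2) (Fin 2 × Fin 2 × Fin 2) ℂ :=
  Matrix.of fun p q => if q = (p.2.2, p.2.1, p.1) then 1 else 0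

/-- Swap of qubits 2 and 3. -/
noncomputable def E23 : Matrix (Fin 2 × Fin 2 × Fin 2) (Fin 2 × Fin 2 × Fin 2) ℂ :=
  Matrix.of fun p q => if q = (p.1, p.2.2, p.2.1) then 1 else 0

/-- The 4-dimensional code subspace of the 3-qubit DFS. -/
noncomputable def codeSpace3 : Submodule ℂ (Fin 2 × Fin 2 × Fin 2 → ℂ) :=
  Submodule.span ℂ
    {(Real.sqrt 2 : ℂ)⁻¹ • (ket3 0 1 0 - ket3 1 0 0),
     (Real.sqrt 2 : ℂ)⁻¹ • (ket3 0 1 1 - ket3 1 0 1),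
     (Real.sqrt 6 : ℂ)⁻¹ • ((2 : ℂ) • ket3 0 0 1 - ket3 0 1 0 - ket3 1 0 0),
     (Real.sqrt 6 : ℂ)⁻¹ • ((-2 : ℂ) • ket3 1 1 0 + ket3 0 1 1 + ket3 1 0 1)}

/-- The relations of the transpositions `(13), (23), (12)` of `S₃`; `ab = bc = ca` and
`ba = cb = ac` are its two `3`-cycles. -/
structure IsTranspositionTriple {A : Type*} [Monoid A] (a b c : A) : Prop where
  mul_self_a : a * a = 1
  mul_self_b : b * b = 1
  mul_self_c : c * c = 1
  ab_eq_bc : a * b = b * c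
  bc_eq_ca : b * c = c * a
  ba_eq_cb : b * a = c * b
  cb_eq_ac : c * b = a * c

namespace IsTranspositionTriple

theorem map {M N : Type*} [Monoid M] [Monoid N] {a b c : M}
    (h : IsTranspositionTriple a b c) (f : M →* N) : IsTranspositionTriple (f a) (f b) (f c) where
  mul_self_a := by rw [← map_mul, h.mul_self_a, map_one]
  mul_self_b := by rw [← map_mul, h.mul_self_b, map_one]
  mul_self_c := by rw [← map_mul, h.mul_self_c, map_one]
  ab_eq_bc := by rw [← map_mul, h.ab_eq_bc, map_mul]
  bc_eq_ca := by rw [← map_mul, h.bc_eq_ca, map_mul]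
  ba_eq_cb := by rw [← map_mul, h.ba_eq_cb, map_mul]
  cb_eq_ac := by rw [← map_mul, h.cb_eq_ac, map_mul]

variable {R A : Type*} [CommRing R] [Ring A] [Algebra R A] {a b c : A}

theorem add_sub_two_smul_mul_self (h : IsTranspositionTriple a b c) :
    (a + b - (2 : R) • c) * (a + b - (2 : R) • c) = (6 : R) • 1 - (3 : R) • (a * b + b * a) := by
  have hca : c * a = a * b := (h.ab_eq_bc.trans h.bc_eq_ca).symm
  have hac : a * c = b * a := (h.ba_eq_cb.trans h.cb_eq_ac).symm
  simp only [add_mul, mul_add, sub_mul, mul_sub, smul_mul_assoc, mul_smul_comm,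
    h.mul_self_a, h.mul_self_b, h.mul_self_c, ← h.ab_eq_bc, hca, ← h.ba_eq_cb, hac]
  module

theorem add_sub_two_smul_cube (h : IsTranspositionTriple a b c) :
    (a + b - (2 : R) • c) * (a + b - (2 : R) • c) * (a + b - (2 : R) • c) =
      (9 : R) • (a + b - (2 : R) • c) := by
  have hab : a * b = c * a := h.ab_eq_bc.trans h.bc_eq_ca
  have hba : b * a = a * c := h.ba_eq_cb.trans h.cb_eq_ac
  have haba : a * b * a = c := by rw [hab, mul_assoc, h.mul_self_a, mul_one]
  have habb : a * b * b = a := by rw [mul_assoc, h.mul_self_b, mul_one]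
  have habc : a * b * c = b := by rw [h.ab_eq_bc, mul_assoc, h.mul_self_c, mul_one]
  have hbaa : b * a * a = b := by rw [mul_assoc, h.mul_self_a, mul_one]
  have hbab : b * a * b = c := by rw [h.ba_eq_cb, mul_assoc, h.mul_self_b, mul_one]
  have hbac : b * a * c = a := by rw [hba, mul_assoc, h.mul_self_c, mul_one]
  rw [h.add_sub_two_smul_mul_self]
  simp only [add_mul, sub_mul, mul_add, mul_sub, smul_mul_assoc, mul_smul_comm, one_mul,
    haba, habb, habc, hbaa, hbab, hbac]
  module

end IsTranspositionTriple

open NormedSpace Complex in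
theorem exp_smul_of_mul_self_mul_eq_self {A : Type*} [Ring A] [Algebra ℂ A] [TopologicalSpace A]
    [IsTopologicalRing A] [ContinuousSMul ℂ A] [T2Space A] {Z : A} (hZ : Z * Z * Z = Z) (t : ℂ) :
    exp (t • Z) = (1 - Z * Z) + cosh t • (Z * Z) + sinh t • Z := by
  have hodd (k : ℕ) : Z ^ (2 * k + 1) = Z := by
    induction k with
    | zero => simp
    | succ k ih =>
      rw [show 2 * (k + 1) + 1 = 2 * k + 1 + 2 by ring, pow_add, ih, sq, ← mul_assoc, hZ]
  have heven (k : ℕ) : Z ^ (2 * k + 2) = Z * Z := by rw [pow_succ, hodd]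
  rw [exp_eq_tsum ℂ]
  refine HasSum.tsum_eq (HasSum.even_add_odd ?_ ?_)
  · convert (hasSum_ite_eq 0 (1 - Z * Z)).add ((hasSum_cosh t).smul_const (Z * Z)) using 1
    funext k
    rcases k with _ | k
    · simp
    · rw [smul_pow, smul_smul, show 2 * (k + 1) = 2 * k + 2 by ring, heven, if_neg k.succ_ne_zero,
        zero_add, div_eq_inv_mul]
  · convert (hasSum_sinh t).smul_const Z using 1
    funext k
    rw [smul_pow, smul_smul, hodd, div_eq_inv_mul]

section QubitSwaps

variable (α : Type*)

def swap12 : Equiv.Perm (α × α × α) where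
  toFun p := (p.2.1, p.1, p.2.2)
  invFun p := (p.2.1, p.1, p.2.2)
  left_inv _ := rfl
  right_inv _ := rfl

def swap13 : Equiv.Perm (α × α × α) where
  toFun p := (p.2.2, p.2.1, p.1)
  invFun p := (p.2.2, p.2.1, p.1)
  left_inv _ := rfl
  right_inv _ := rfl

def swap23 : Equiv.Perm (α × α × α) where
  toFun p := (p.1, p.2.2, p.2.1)
  invFun p := (p.1, p.2.2, p.2.1)
  left_inv _ := rfl
  right_inv _ := rfl

theorem isTranspositionTriple_swap13_swap23_swap12 :
    IsTranspositionTriple (swap13 α) (swap23 α) (swap12 α) :=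
  ⟨rfl, rfl, rfl, rfl, rfl, rfl, rfl⟩

end QubitSwaps

theorem E12_eq_permMatrixHom : E12 = Matrix.permMatrixHom (R := ℂ) (swap12 (Fin 2)) := by
  ext p q
  simp [E12, swap12, Equiv.toPEquiv_apply, eq_comm]

theorem E13_eq_permMatrixHom : E13 = Matrix.permMatrixHom (R := ℂ) (swap13 (Fin 2)) := by
  ext p q
  simp [E13, swap13, Equiv.toPEquiv_apply, eq_comm]

theorem E23_eq_permMatrixHom : E23 = Matrix.permMatrixHom (R := ℂ) (swap23 (Fin 2)) := by
  ext p q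
  simp [E23, swap23, Equiv.toPEquiv_apply, eq_comm]

theorem isTranspositionTriple_E13_E23_E12 : IsTranspositionTriple E13 E23 E12 := by
  rw [E12_eq_permMatrixHom, E13_eq_permMatrixHom, E23_eq_permMatrixHom]
  exact (isTranspositionTriple_swap13_swap23_swap12 _).map _

theorem E13_mulVec (v : Fin 2 × Fin 2 × Fin 2 → ℂ) : E13 *ᵥ v = v ∘ swap13 (Fin 2) := by
  rw [E13_eq_permMatrixHom, Matrix.permMatrixHom_apply, Matrix.permMatrix_mulVec]
  rfl

theorem E23_mulVec (v : Fin 2 × Fin 2 × Fin 2 → ℂ) : E23 *ᵥ v = v ∘ swap23 (Fin 2) := by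
  rw [E23_eq_permMatrixHom, Matrix.permMatrixHom_apply, Matrix.permMatrix_mulVec]
  rfl

theorem E13_mulVec_ket3 (a b c : Fin 2) : E13 *ᵥ ket3 a b c = ket3 c b a := by
  rw [E13_mulVec]
  ext ⟨x, y, z⟩
  refine if_congr (?_ : (z, y, x) = (a, b, c) ↔ (x, y, z) = (c, b, a)) rfl rfl
  simp only [Prod.mk.injEq]
  tauto

theorem E23_mulVec_ket3 (a b c : Fin 2) : E23 *ᵥ ket3 a b c = ket3 a c b := by
  rw [E23_mulVec]
  ext ⟨x, y, z⟩
  refine if_congr (?_ : (x, z, y) = (a, b, c) ↔ (x, y, z) = (a, c, b)) rfl rfl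
  simp only [Prod.mk.injEq]
  tauto

theorem star_ket3 (a b c : Fin 2) : star (ket3 a b c) = ket3 a b c := by
  ext p
  simp only [ket3, Pi.star_apply]
  split_ifs <;> simp

theorem ket3_dotProduct (a b c : Fin 2) (w : Fin 2 × Fin 2 × Fin 2 → ℂ) :
    ket3 a b c ⬝ᵥ w = w (a, b, c) := by
  simp [ket3, dotProduct]

-- `E₁₃ * E₂₃` and `E₂₃ * E₁₃` are the two cyclic shifts of the qubits.
noncomputable def cyclicSymmetrizer : Matrix (Fin 2 × Fin 2 × Fin 2) (Fin 2 × Fin 2 × Fin 2) ℂ :=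
  1 + E13 * E23 + E23 * E13

theorem cyclicSymmetrizer_mulVec_ket3 (a b c : Fin 2) :
    cyclicSymmetrizer *ᵥ ket3 a b c = ket3 a b c + ket3 b c a + ket3 c a b := by
  simp only [cyclicSymmetrizer, Matrix.add_mulVec, Matrix.one_mulVec, ← Matrix.mulVec_mulVec,
    E13_mulVec_ket3, E23_mulVec_ket3]

theorem cyclicSymmetrizer_mulVec_of_mem {v : Fin 2 × Fin 2 × Fin 2 → ℂ} (hv : v ∈ codeSpace3) :
    cyclicSymmetrizer *ᵥ v = 0 := by
  suffices codeSpace3 ≤ LinearMap.ker cyclicSymmetrizer.mulVecLin from this hv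
  refine Submodule.span_le.2 ?_
  rintro x (rfl | rfl | rfl | rfl) <;>
    simp only [SetLike.mem_coe, LinearMap.mem_ker, Matrix.mulVecLin_apply, Matrix.mulVec_smul,
      Matrix.mulVec_sub, Matrix.mulVec_add, cyclicSymmetrizer_mulVec_ket3] <;>
    module

theorem E13_E23_mulVec_eq_self_of_orthogonal {w : Fin 2 × Fin 2 × Fin 2 → ℂ}
    (hw : ∀ v ∈ codeSpace3, star v ⬝ᵥ w = 0) : E13 *ᵥ w = w ∧ E23 *ᵥ w = w := by
  have orth {c : ℂ} (hc : c ≠ 0) {x} (hx : c • x ∈ codeSpace3) : star x ⬝ᵥ w = 0 :=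
    hw x ((Submodule.smul_mem_iff _ hc).1 hx)
  have h2 : (Real.sqrt 2 : ℂ)⁻¹ ≠ 0 := by simp
  have h6 : (Real.sqrt 6 : ℂ)⁻¹ ≠ 0 := by simp
  have e1 := orth h2 (Submodule.subset_span (.inl rfl))
  have e2 := orth h2 (Submodule.subset_span (.inr (.inl rfl)))
  have e3 := orth h6 (Submodule.subset_span (.inr (.inr (.inl rfl))))
  have e4 := orth h6 (Submodule.subset_span (.inr (.inr (.inr rfl))))
  simp only [star_sub, star_add, star_smul, star_neg, star_ofNat, star_ket3, sub_dotProduct,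
    add_dotProduct, smul_dotProduct, ket3_dotProduct, smul_eq_mul] at e1 e2 e3 e4
  have w001 : w (0, 0, 1) = w (1, 0, 0) := by linear_combination (e3 + e1) / 2
  have w010 : w (0, 1, 0) = w (1, 0, 0) := by linear_combination e1
  have w011 : w (0, 1, 1) = w (1, 1, 0) := by linear_combination (e2 + e4) / 2
  have w101 : w (1, 0, 1) = w (1, 1, 0) := by linear_combination (e4 - e2) / 2
  constructor <;> ext ⟨x, y, z⟩ <;> simp only [E13_mulVec, E23_mulVec] <;>
    fin_cases x <;> fin_cases y <;> fin_cases z <;> simp [swap13, swap23, w001, w010, w011, w101]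

noncomputable def zBar : Matrix (Fin 2 × Fin 2 × Fin 2) (Fin 2 × Fin 2 × Fin 2) ℂ :=
  (1 / 3 : ℂ) • (E13 + E23 - (2 : ℂ) • E12)

theorem zBar_mul_zBar : zBar * zBar = 1 - (1 / 3 : ℂ) • cyclicSymmetrizer := by
  rw [zBar, smul_mul_smul_comm, isTranspositionTriple_E13_E23_E12.add_sub_two_smul_mul_self,
    cyclicSymmetrizer]
  module

theorem zBar_mul_zBar_mul_zBar : zBar * zBar * zBar = zBar := by
  rw [zBar, smul_mul_smul_comm, smul_mul_smul_comm,
    isTranspositionTriple_E13_E23_E12.add_sub_two_smul_cube]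
  module

theorem zBar_mul_zBar_mulVec_of_mem {v : Fin 2 × Fin 2 × Fin 2 → ℂ} (hv : v ∈ codeSpace3) :
    (zBar * zBar) *ᵥ v = v := by
  rw [zBar_mul_zBar, Matrix.sub_mulVec, Matrix.one_mulVec, Matrix.smul_mulVec,
    cyclicSymmetrizer_mulVec_of_mem hv, smul_zero, sub_zero]

theorem zBar_mul_zBar_mulVec_of_orthogonal {w : Fin 2 × Fin 2 × Fin 2 → ℂ}
    (hw : ∀ v ∈ codeSpace3, star v ⬝ᵥ w = 0) : (zBar * zBar) *ᵥ w = 0 := by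
  obtain ⟨h13, h23⟩ := E13_E23_mulVec_eq_self_of_orthogonal hw
  rw [zBar_mul_zBar, Matrix.sub_mulVec, Matrix.one_mulVec, Matrix.smul_mulVec, cyclicSymmetrizer,
    Matrix.add_mulVec, Matrix.add_mulVec, ← Matrix.mulVec_mulVec, ← Matrix.mulVec_mulVec, h13, h23,
    h13, Matrix.one_mulVec]
  module

theorem exp_neg_I_pi_smul_zBar :
    NormedSpace.exp ((-(Complex.I * (Real.pi : ℂ))) • zBar) = 1 - (2 : ℂ) • (zBar * zBar) := by
  rw [exp_smul_of_mul_self_mul_eq_self zBar_mul_zBar_mul_zBar, Complex.cosh_neg, Complex.sinh_neg,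
    mul_comm, Complex.cosh_mul_I, Complex.sinh_mul_I, Complex.cos_pi, Complex.sin_pi]
  module

/-- `Z̄³ = Z̄`, `Z̄²` is the orthogonal projection onto the code
subspace, and `R_L = exp(-iπZ̄)` acts as `-1` on the code subspace and as the
identity on its orthogonal complement. -/
theorem leo_three_qubit_dfs
    (Zbar : Matrix (Fin 2 × Fin 2 × Fin 2) (Fin 2 × Fin 2 × Fin 2) ℂ)
    (hZ : Zbar = (1 / 3 : ℂ) • (E13 + E23 - (2 : ℂ) • E12))
    (R : Matrix (Fin 2 × Fin 2 × Fin 2) (Fin 2 × Fin 2 × Fin 2) ℂ)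
    (hR : R = NormedSpace.exp ((-(Complex.I * (Real.pi : ℂ))) • Zbar)) :
    Zbar * Zbar * Zbar = Zbar ∧
    (∀ v ∈ codeSpace3, (Zbar * Zbar).mulVec v = v) ∧
    (∀ w : Fin 2 × Fin 2 × Fin 2 → ℂ,
      (∀ v ∈ codeSpace3, dotProduct (star v) w = 0) →
      (Zbar * Zbar).mulVec w = 0) ∧
    (∀ v ∈ codeSpace3, R.mulVec v = -v) ∧
    (∀ w : Fin 2 × Fin 2 × Fin 2 → ℂ,
      (∀ v ∈ codeSpace3, dotProduct (star v) w = 0) →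
      R.mulVec w = w) := by
  obtain rfl : Zbar = zBar := hZ
  rw [exp_neg_I_pi_smul_zBar] at hR
  subst hR
  refine ⟨zBar_mul_zBar_mul_zBar, fun v hv => zBar_mul_zBar_mulVec_of_mem hv,
    fun w hw => zBar_mul_zBar_mulVec_of_orthogonal hw, fun v hv => ?_, fun w hw => ?_⟩
  · rw [Matrix.sub_mulVec, Matrix.one_mulVec, Matrix.smul_mulVec, zBar_mul_zBar_mulVec_of_mem hv]
    module
  · rw [Matrix.sub_mulVec, Matrix.one_mulVec, Matrix.smul_mulVec,
      zBar_mul_zBar_mulVec_of_orthogonal hw, smul_zero, sub_zero]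
end

section
/- The collective spin operator S_Z = σ_z⊗I⊗I + I⊗σ_z⊗I + I⊗I⊗σ_z on (C²)^⊗3 preserves the code subspace C (spanned by the four J=1/2 DFS vectors) and acts on it as Π_C-block operator with identical action on the λ=0 and λ=1 subsystems; in particular S_Z commutes with the logical operators X̄ = (1/√3)(E₂₃-E₁₃) and Z̄ = (1/3)(E₁₃+E₂₃-2E₁₂). -/
open Matrix

open Kronecker

/-- The Pauli Z matrix. -/
noncomputable def pauliZ : Matrix (Fin 2) (Fin 2) ℂ := !![1, 0; 0, -1]

/-- Collective spin operator `S_Z = σz⊗I⊗I + I⊗σz⊗I + I⊗I⊗σz`. -/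
noncomputable def SZ3 : Matrix (Fin 2 × Fin 2 × Fin 2) (Fin 2 × Fin 2 × Fin 2) ℂ :=
  pauliZ ⊗ₖ ((1 : Matrix (Fin 2) (Fin 2) ℂ) ⊗ₖ (1 : Matrix (Fin 2) (Fin 2) ℂ)) +
  (1 : Matrix (Fin 2) (Fin 2) ℂ) ⊗ₖ (pauliZ ⊗ₖ (1 : Matrix (Fin 2) (Fin 2) ℂ)) +
  (1 : Matrix (Fin 2) (Fin 2) ℂ) ⊗ₖ ((1 : Matrix (Fin 2) (Fin 2) ℂ) ⊗ₖ pauliZ)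

/-!
`S_Z` is diagonal in the computational basis, its eigenvalue on `|abc⟩` being the total spin
`z(a) + z(b) + z(c)`, which is symmetric in the three qubits. Hence `S_Z` commutes with every
qubit swap, so with `X̄` and `Z̄`; and each spanning vector of the code space is a combination of
basis states of one total spin, hence an eigenvector of `S_Z`, so the code space is invariant.
-/

namespace Matrix

variable {n R : Type*} [Fintype n] [CommSemiring R]

theorem commute_diagonal_of_invariant [DecidableEq n] (f : n → n) (d : n → R)
    (hd : ∀ p, d (f p) = d p) :
    Commute (diagonal d) (of fun p q => if q = f p then 1 else 0) := by
  ext p q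
  simp only [diagonal_mul, mul_diagonal, of_apply, mul_ite, ite_mul, mul_one, one_mul, mul_zero,
    zero_mul]
  split_ifs with h
  · rw [h, hd]
  · rfl

theorem mulVec_mem_span_of_forall_exists_smul (A : Matrix n n R) (s : Set (n → R))
    (h : ∀ v ∈ s, ∃ c : R, A *ᵥ v = c • v) :
    ∀ v ∈ Submodule.span R s, A *ᵥ v ∈ Submodule.span R s := by
  suffices Submodule.span R s ≤ (Submodule.span R s).comap A.mulVecLin from fun v hv => this hv
  refine Submodule.span_le.2 fun v hv => ?_
  obtain ⟨c, hc⟩ := h v hv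
  simpa [hc] using Submodule.smul_mem _ c (Submodule.subset_span hv)

end Matrix

def spinZ : Fin 2 → ℂ := ![1, -1]

def totalSpinZ (p : Fin 2 × Fin 2 × Fin 2) : ℂ := spinZ p.1 + spinZ p.2.1 + spinZ p.2.2

theorem pauliZ_eq_diagonal : pauliZ = diagonal spinZ := by
  ext i j
  fin_cases i <;> fin_cases j <;> simp [pauliZ, spinZ]

theorem SZ3_eq_diagonal : SZ3 = diagonal totalSpinZ := by
  rw [SZ3, pauliZ_eq_diagonal, ← diagonal_one]
  simp only [diagonal_kronecker_diagonal, diagonal_add, mul_one, one_mul]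
  rfl

theorem SZ3_commute_E12 : Commute SZ3 E12 := by
  rw [SZ3_eq_diagonal]
  exact commute_diagonal_of_invariant _ _ fun p => by simp only [totalSpinZ]; ring

theorem SZ3_commute_E13 : Commute SZ3 E13 := by
  rw [SZ3_eq_diagonal]
  exact commute_diagonal_of_invariant _ _ fun p => by simp only [totalSpinZ]; ring

theorem SZ3_commute_E23 : Commute SZ3 E23 := by
  rw [SZ3_eq_diagonal]
  exact commute_diagonal_of_invariant _ _ fun p => by simp only [totalSpinZ]; ring

theorem ket3_eq_single (a b c : Fin 2) : ket3 a b c = Pi.single (a, b, c) 1 := by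
  ext x
  simp [ket3, Pi.single_apply]

theorem SZ3_mulVec_ket3 (a b c : Fin 2) :
    SZ3 *ᵥ ket3 a b c = totalSpinZ (a, b, c) • ket3 a b c := by
  rw [SZ3_eq_diagonal, ket3_eq_single, diagonal_mulVec_single, ← Pi.single_smul', smul_eq_mul]

theorem SZ3_mulVec_mem_codeSpace3 : ∀ v ∈ codeSpace3, SZ3 *ᵥ v ∈ codeSpace3 := by
  refine SZ3.mulVec_mem_span_of_forall_exists_smul _ ?_
  simp only [Set.mem_insert_iff, Set.mem_singleton_iff, forall_eq_or_imp, forall_eq]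
  refine ⟨⟨1, ?_⟩, ⟨-1, ?_⟩, ⟨1, ?_⟩, ⟨-1, ?_⟩⟩ <;>
  · simp only [mulVec_smul, mulVec_sub, mulVec_add, SZ3_mulVec_ket3, totalSpinZ, spinZ,
      cons_val_zero, cons_val_one]
    module

/-- the collective spin operator `S_Z` preserves the code subspace of
the 3-qubit DFS and commutes with the logical operators `X̄` and `Z̄`. -/
theorem collective_Z_preserves_code
    (Xbar Zbar : Matrix (Fin 2 × Fin 2 × Fin 2) (Fin 2 × Fin 2 × Fin 2) ℂ)
    (hX : Xbar = (Real.sqrt 3 : ℂ)⁻¹ • (E23 - E13))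
    (hZ : Zbar = (1 / 3 : ℂ) • (E13 + E23 - (2 : ℂ) • E12)) :
    (∀ v ∈ codeSpace3, SZ3.mulVec v ∈ codeSpace3) ∧
    Commute SZ3 Xbar ∧ Commute SZ3 Zbar := by
  refine ⟨SZ3_mulVec_mem_codeSpace3, ?_, ?_⟩
  · rw [hX]
    exact (SZ3_commute_E23.sub_right SZ3_commute_E13).smul_right _
  · rw [hZ]
    exact ((SZ3_commute_E13.add_right SZ3_commute_E23).sub_right
      (SZ3_commute_E12.smul_right 2)).smul_right _
end
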